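/- Let n ≥ 5 and let η₂ > 0 be an arbitrarily small number. There exist ε₀ > 0 and a constant C > 0 depending only on n, ε₀ and η₂ such that for every p on the critical hyperbola with |p − 1| ≤ ε₀, the ground state (U_p, V_p) satisfies U_p(x) ≥ C/(1 + |x|^{n−4+η₂}) and V_p(x) ≥ C/(1 + |x|^{n−2}) for all x ∈ ℝⁿ. -/

import Mathlib

open Filter MeasureTheory Topology

noncomputable def lap {n : ℕ} (f : EuclideanSpace ℝ (Fin n) → ℝ)
    (x : EuclideanSpace ℝ (Fin n)) : ℝ :=
  ∑ i, fderiv ℝ (fderiv ℝ f) x (EuclideanSpace.single i 1) (EuclideanSpace.single i 1)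

def IsGroundState (n : ℕ) (p q : ℝ) (U V : EuclideanSpace ℝ (Fin n) → ℝ) : Prop :=
  ContDiff ℝ 2 U ∧ ContDiff ℝ 2 V ∧
  (∀ x, 0 < U x) ∧ (∀ x, 0 < V x) ∧
  (∀ x, -lap U x = V x ^ p) ∧ (∀ x, -lap V x = U x ^ q) ∧
  (∀ x y, ‖x‖ ≤ ‖y‖ → U y ≤ U x) ∧
  (∀ x y, ‖x‖ ≤ ‖y‖ → V y ≤ V x) ∧
  Tendsto U (cocompact _) (nhds 0) ∧
  Tendsto V (cocompact _) (nhds 0) ∧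
  U 0 = 1

/-!
Along a ray the ground state gives radial profiles `u, v` with
`(r ^ (n-1) u')' = -r ^ (n-1) v ^ p` and `(r ^ (n-1) v')' = -r ^ (n-1) u ^ q`, so that
`-u'(r) = r ^ (1-n) ∫₀ʳ s ^ (n-1) v ^ p` and similarly for `v`. Since `0 < u ≤ 1`, `u` drops by less
than `1` on `[1/2, 1]`, which bounds `v 1` and then `v 0`; hence `u ≥ 3/4` on a ball whose radius
depends only on `n`, the mass `∫₀ʳ s ^ (n-1) u ^ q` is bounded below (here `q ≤ 4n` is used), and
`v r ≥ c r ^ (2-n)`. Feeding this into the equation for `u` on `[r, 2r]` gives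
`u r ≥ c r ^ (2 - (n-2) p)`, and `(n-2) p - 2 ≤ n - 4 + η₂` once `p ≤ 1 + η₂ / (n-2)`.
-/

open Set intervalIntegral

theorem integral_pow_mul_mono {F : ℝ → ℝ} (hF : Continuous F) (hF0 : ∀ s, 0 ≤ F s) (k : ℕ)
    {a b : ℝ} (ha : 0 ≤ a) (hab : a ≤ b) :
    ∫ s in (0)..a, s ^ k * F s ≤ ∫ s in (0)..b, s ^ k * F s :=
  integral_mono_interval le_rfl ha hab
    (ae_restrict_of_forall_mem measurableSet_Ioc fun s hs =>
      mul_nonneg (pow_nonneg hs.1.le _) (hF0 s))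
    (((continuous_pow _).mul hF).intervalIntegrable _ _)

theorem mul_half_pow_le_integral_pow_mul {F : ℝ → ℝ} (hF : Continuous F) (hF0 : ∀ s, 0 ≤ F s)
    (k : ℕ) {r m : ℝ} (hr : 0 ≤ r) (hm : 0 ≤ m) (hmF : ∀ s ∈ Icc (r / 2) r, m ≤ F s) :
    m * (r / 2) ^ k * (r / 2) ≤ ∫ s in (0)..r, s ^ k * F s := by
  calc m * (r / 2) ^ k * (r / 2) = ∫ _ in (r / 2)..r, (r / 2) ^ k * m := by
        rw [intervalIntegral.integral_const, smul_eq_mul]; ring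
    _ ≤ ∫ s in (r / 2)..r, s ^ k * F s := by
        refine integral_mono_on (by linarith) intervalIntegrable_const
          (((continuous_pow _).mul hF).intervalIntegrable _ _) fun s hs => ?_
        exact mul_le_mul (pow_le_pow_left₀ (by linarith) hs.1 _) (hmF s hs) hm
          (pow_nonneg (by linarith [hs.1]) _)
    _ ≤ ∫ s in (0)..r, s ^ k * F s :=
        integral_mono_interval (by linarith) (by linarith) le_rfl
          (ae_restrict_of_forall_mem measurableSet_Ioc fun s hs =>
            mul_nonneg (pow_nonneg hs.1.le _) (hF0 s))
          (((continuous_pow _).mul hF).intervalIntegrable _ _)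

/-- The radial equation `φ'' + (n - 1) φ' / t = -F`, i.e. `-Δ (φ ∘ ‖·‖) = F ∘ ‖·‖` in `ℝⁿ`,
integrated once from the origin. -/
structure IsRadialProfile (n : ℕ) (φ F : ℝ → ℝ) : Prop where
  differentiable : Differentiable ℝ φ
  continuous_source : Continuous F
  pow_mul_deriv : ∀ t, 0 < t → t ^ (n - 1) * deriv φ t = -∫ s in (0)..t, s ^ (n - 1) * F s

namespace IsRadialProfile

variable {n : ℕ} {φ F : ℝ → ℝ}

theorem of_ode (hn : 2 ≤ n) {φ' φ'' : ℝ → ℝ} (hφ : ∀ t, HasDerivAt φ (φ' t) t)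
    (hφ' : ∀ t, HasDerivAt φ' (φ'' t) t) (hF : Continuous F)
    (hode : ∀ t, 0 < t → φ'' t + (n - 1) * φ' t / t = -F t) : IsRadialProfile n φ F := by
  obtain ⟨k, rfl⟩ := Nat.exists_eq_add_of_le' hn
  refine ⟨fun t => (hφ t).differentiableAt, hF, fun t ht => ?_⟩
  simp only [(hφ t).deriv]
  have hsource : Continuous fun s : ℝ => s ^ (k + 1) * F s := by fun_prop
  set flux : ℝ → ℝ := fun s => s ^ (k + 1) * φ' s + ∫ σ in (0)..s, σ ^ (k + 1) * F σ
  have hflux : ∀ s, HasDerivAt flux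
      ((k + 1 : ℕ) * s ^ k * φ' s + s ^ (k + 1) * φ'' s + s ^ (k + 1) * F s) s := fun s =>
    ((hasDerivAt_pow (k + 1) s).mul (hφ' s)).add
      (hsource.integral_hasStrictDerivAt 0 s).hasDerivAt
  have hflux_pos : ∀ s ∈ Ioo 0 t, HasDerivAt flux 0 s := by
    intro s ⟨hs, _⟩
    convert hflux s using 1
    have := hode s hs
    field_simp at this
    push_cast at this ⊢
    linear_combination (-s ^ k) * this
  obtain ⟨c, -, hc⟩ := exists_hasDerivAt_eq_slope flux (fun _ => 0) ht
    (fun s _ => (hflux s).continuousAt.continuousWithinAt) hflux_pos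
  have : flux t = flux 0 := by
    rw [eq_comm, div_eq_zero_iff] at hc
    rcases hc with hc | hc <;> linarith
  simpa [flux, eq_neg_iff_add_eq_zero] using this

theorem neg_deriv_eq (h : IsRadialProfile n φ F) {t : ℝ} (ht : 0 < t) :
    -deriv φ t = (∫ s in (0)..t, s ^ (n - 1) * F s) / t ^ (n - 1) := by
  rw [eq_div_iff (pow_pos ht _).ne', neg_mul, mul_comm, h.pow_mul_deriv t ht, neg_neg]

theorem sub_le_mul_sq (h : IsRadialProfile n φ F) {r K : ℝ} (hr : 0 ≤ r) (hK : 0 ≤ K)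
    (hFK : ∀ s ∈ Icc 0 r, F s ≤ K) : φ 0 - φ r ≤ K * r ^ 2 := by
  have hderiv : ∀ s ∈ interior (Icc 0 r), -(K * r) ≤ deriv φ s := by
    rw [interior_Icc]
    rintro s ⟨hs, hsr⟩
    have hint : (∫ σ in (0)..s, σ ^ (n - 1) * F σ) ≤ ∫ _ in (0)..s, s ^ (n - 1) * K := by
      refine integral_mono_on hs.le
        (((continuous_pow _).mul h.continuous_source).intervalIntegrable _ _)
        intervalIntegrable_const fun σ hσ => ?_
      calc σ ^ (n - 1) * F σ ≤ σ ^ (n - 1) * K :=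
            mul_le_mul_of_nonneg_left (hFK σ ⟨hσ.1, hσ.2.trans hsr.le⟩) (pow_nonneg hσ.1 _)
        _ ≤ s ^ (n - 1) * K := mul_le_mul_of_nonneg_right (pow_le_pow_left₀ hσ.1 hσ.2 _) hK
    have hneg : -deriv φ s ≤ K * s := by
      rw [h.neg_deriv_eq hs, div_le_iff₀ (pow_pos hs _)]
      rw [intervalIntegral.integral_const, smul_eq_mul, sub_zero] at hint
      linarith
    nlinarith
  have := (convex_Icc 0 r).mul_sub_le_image_sub_of_le_deriv
    h.differentiable.continuous.continuousOn h.differentiable.differentiableOn hderiv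
    0 ⟨le_rfl, hr⟩ r ⟨hr, le_rfl⟩ hr
  linarith

theorem mul_integral_div_le_sub (h : IsRadialProfile n φ F) (hF : ∀ s, 0 ≤ F s) {r : ℝ}
    (hr : 0 < r) :
    r * (∫ s in (0)..r, s ^ (n - 1) * F s) / (2 * r) ^ (n - 1) ≤ φ r - φ (2 * r) := by
  set I : ℝ → ℝ := fun t => ∫ s in (0)..t, s ^ (n - 1) * F s
  have hI : ∀ t, 0 ≤ t → 0 ≤ I t := fun t ht =>
    integral_nonneg ht fun s hs => mul_nonneg (pow_nonneg hs.1 _) (hF s)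
  have hderiv : ∀ s ∈ interior (Icc r (2 * r)), deriv φ s ≤ -(I r / (2 * r) ^ (n - 1)) := by
    rw [interior_Icc]
    rintro s ⟨hrs, hs2r⟩
    have hs : 0 < s := hr.trans hrs
    have hIrs : I r ≤ I s := integral_pow_mul_mono h.continuous_source hF _ hr.le hrs.le
    have : I r / (2 * r) ^ (n - 1) ≤ -deriv φ s := by
      rw [h.neg_deriv_eq hs]
      exact div_le_div₀ (hI s hs.le) hIrs (pow_pos hs _) (pow_le_pow_left₀ hs.le hs2r.le _)
    linarith
  have := (convex_Icc r (2 * r)).image_sub_le_mul_sub_of_deriv_le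
    h.differentiable.continuous.continuousOn h.differentiable.differentiableOn hderiv
    r ⟨le_rfl, by linarith⟩ (2 * r) ⟨by linarith, le_rfl⟩ (by linarith)
  have hr2 : 2 * r - r = r := by ring
  rw [hr2] at this
  calc r * I r / (2 * r) ^ (n - 1) = I r / (2 * r) ^ (n - 1) * r := by ring
    _ ≤ φ r - φ (2 * r) := by linarith

theorem mul_sq_le_sub (h : IsRadialProfile n φ F) (hF : ∀ s, 0 ≤ F s) {r m : ℝ} (hr : 0 < r)
    (hm : 0 ≤ m) (hmF : ∀ s ∈ Icc (r / 2) r, m ≤ F s) :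
    m * r ^ 2 / (2 * 4 ^ (n - 1)) ≤ φ r - φ (2 * r) := by
  have h4 : (2 * r) ^ (n - 1) = 4 ^ (n - 1) * (r / 2) ^ (n - 1) := by
    rw [← mul_pow]; ring_nf
  calc m * r ^ 2 / (2 * 4 ^ (n - 1))
      = r * (m * (r / 2) ^ (n - 1) * (r / 2)) / (2 * r) ^ (n - 1) := by
        rw [h4]; field_simp
    _ ≤ r * (∫ s in (0)..r, s ^ (n - 1) * F s) / (2 * r) ^ (n - 1) := by
        gcongr
        exact mul_half_pow_le_integral_pow_mul h.continuous_source hF _ hr.le hm hmF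
    _ ≤ φ r - φ (2 * r) := h.mul_integral_div_le_sub hF hr

end IsRadialProfile

theorem div_two_mul_pow_pred {r : ℝ} (hr : 0 < r) {n : ℕ} (hn : 1 ≤ n) :
    r / (2 * r) ^ (n - 1) = r ^ (2 - (n : ℝ)) / 2 ^ (n - 1) := by
  obtain ⟨k, rfl⟩ := Nat.exists_eq_add_of_le' hn
  rw [Nat.add_sub_cancel, mul_pow, show (2 : ℝ) - (k + 1 : ℕ) = 1 - k by push_cast; ring,
    Real.rpow_sub hr, Real.rpow_one, Real.rpow_natCast]
  field_simp

theorem div_one_add_rpow_le_of_antitoneOn {f : ℝ → ℝ} (hf : AntitoneOn f (Ici 0)) {C a : ℝ}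
    (hC : 0 ≤ C) (hfC : ∀ r, 1 ≤ r → C * r ^ (-a) ≤ f r) {r : ℝ} (hr : 0 ≤ r) :
    C / (1 + r ^ a) ≤ f r := by
  have hra : 0 ≤ r ^ a := Real.rpow_nonneg hr a
  rcases le_total 1 r with h1r | hr1
  · calc C / (1 + r ^ a) ≤ C / r ^ a :=
          div_le_div_of_nonneg_left hC (Real.rpow_pos_of_pos (by linarith) a) (by linarith)
      _ = C * r ^ (-a) := by rw [Real.rpow_neg hr, div_eq_mul_inv]
      _ ≤ f r := hfC r h1r
  · calc C / (1 + r ^ a) ≤ C := div_le_self hC (by linarith)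
      _ = C * 1 ^ (-a) := by rw [Real.one_rpow, mul_one]
      _ ≤ f 1 := hfC 1 le_rfl
      _ ≤ f r := hf hr (zero_le_one' ℝ) hr1

structure IsRadialGroundState (n : ℕ) (p q : ℝ) (u v : ℝ → ℝ) : Prop where
  profile_u : IsRadialProfile n u fun t => v t ^ p
  profile_v : IsRadialProfile n v fun t => u t ^ q
  u_pos : ∀ t, 0 < u t
  v_pos : ∀ t, 0 < v t
  u_antitoneOn : AntitoneOn u (Ici 0)
  v_antitoneOn : AntitoneOn v (Ici 0)
  u_zero : u 0 = 1

noncomputable def centralBound (n : ℕ) : ℝ := (8 * 4 ^ (n - 1)) ^ 2 + 1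

noncomputable def coreRadius (n : ℕ) : ℝ := 1 / (2 * centralBound n)

noncomputable def decayConst (n : ℕ) : ℝ :=
  (1 / 16) ^ n * (coreRadius n / 2) ^ (n - 1) * (coreRadius n / 2) / 2 ^ (n - 1)

noncomputable def groundConst (n : ℕ) : ℝ := decayConst n ^ 2 / (2 * 4 ^ (n - 1))

theorem one_le_centralBound (n : ℕ) : 1 ≤ centralBound n := by
  unfold centralBound; nlinarith [sq_nonneg (8 * 4 ^ (n - 1) : ℝ)]

theorem coreRadius_pos (n : ℕ) : 0 < coreRadius n := by
  have := one_le_centralBound n; unfold coreRadius; positivity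

theorem coreRadius_le_one (n : ℕ) : coreRadius n ≤ 1 := by
  have := one_le_centralBound n
  unfold coreRadius; rw [div_le_one (by positivity)]; linarith

theorem decayConst_pos (n : ℕ) : 0 < decayConst n := by
  have := coreRadius_pos n; unfold decayConst; positivity

theorem decayConst_le_one (n : ℕ) : decayConst n ≤ 1 := by
  have h0 := coreRadius_pos n
  have h1 := coreRadius_le_one n
  unfold decayConst
  rw [div_le_one (by positivity)]
  calc (1 / 16 : ℝ) ^ n * (coreRadius n / 2) ^ (n - 1) * (coreRadius n / 2)
      ≤ 1 * 1 * 1 := by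
        gcongr
        · exact pow_le_one₀ (by norm_num) (by norm_num)
        · exact pow_le_one₀ (by positivity) (by linarith)
        · linarith
    _ ≤ 2 ^ (n - 1) := by rw [mul_one, mul_one]; exact one_le_pow₀ (by norm_num)

theorem groundConst_pos (n : ℕ) : 0 < groundConst n := by
  have := decayConst_pos n; unfold groundConst; positivity

theorem groundConst_le_decayConst (n : ℕ) : groundConst n ≤ decayConst n := by
  have h0 := decayConst_pos n
  have h1 := decayConst_le_one n
  unfold groundConst
  rw [div_le_iff₀ (by positivity)]
  have : (1 : ℝ) ≤ 2 * 4 ^ (n - 1) := by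
    linarith [one_le_pow₀ (by norm_num : (1 : ℝ) ≤ 4) (n := n - 1)]
  nlinarith

namespace IsRadialGroundState

variable {n : ℕ} {p q : ℝ} {u v : ℝ → ℝ}

theorem u_le_one (h : IsRadialGroundState n p q u v) {t : ℝ} (ht : 0 ≤ t) : u t ≤ 1 :=
  h.u_zero ▸ h.u_antitoneOn (mem_Ici.2 le_rfl) ht ht

theorem v_one_le (h : IsRadialGroundState n p q u v) (hp : 1 / 2 ≤ p) :
    v 1 ≤ (8 * 4 ^ (n - 1)) ^ 2 := by
  have hp0 : 0 ≤ p := by linarith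
  have hdrop := h.profile_u.mul_sq_le_sub (fun s => (Real.rpow_pos_of_pos (h.v_pos s) p).le)
    (r := 1 / 2) (m := v 1 ^ p) (by norm_num) (Real.rpow_nonneg (h.v_pos 1).le p)
    fun s hs => Real.rpow_le_rpow (h.v_pos 1).le
      (h.v_antitoneOn (mem_Ici.2 (by linarith [hs.1])) (mem_Ici.2 zero_le_one)
        (by linarith [hs.2])) hp0
  have hu : u (1 / 2) - u (2 * (1 / 2)) < 1 := by
    linarith [h.u_le_one (t := 1 / 2) (by norm_num), h.u_pos (2 * (1 / 2))]
  have hvp : v 1 ^ p ≤ 8 * 4 ^ (n - 1) := by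
    have h4 : (0 : ℝ) < 2 * 4 ^ (n - 1) := by positivity
    rw [div_le_iff₀ h4] at hdrop
    nlinarith
  rcases le_total (v 1) 1 with hv1 | hv1
  · exact hv1.trans (by nlinarith [one_le_pow₀ (by norm_num : (1 : ℝ) ≤ 4) (n := n - 1)])
  · calc v 1 = v 1 ^ (1 : ℝ) := (Real.rpow_one _).symm
      _ ≤ v 1 ^ (p * 2) := Real.rpow_le_rpow_of_exponent_le hv1 (by linarith)
      _ = (v 1 ^ p) ^ 2 := by rw [Real.rpow_mul (h.v_pos 1).le, Real.rpow_two]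
      _ ≤ (8 * 4 ^ (n - 1)) ^ 2 := by gcongr

theorem v_zero_le_centralBound (h : IsRadialGroundState n p q u v) (hp : 1 / 2 ≤ p)
    (hq : 0 ≤ q) : v 0 ≤ centralBound n := by
  have hdrop := h.profile_v.sub_le_mul_sq (r := 1) zero_le_one zero_le_one fun s hs =>
    Real.rpow_le_one (h.u_pos s).le (h.u_le_one hs.1) hq
  have := h.v_one_le hp
  unfold centralBound
  linarith

theorem three_quarters_le_u_coreRadius (h : IsRadialGroundState n p q u v)
    (hp : p ∈ Icc (1 / 2) 2) (hq : 0 ≤ q) : 3 / 4 ≤ u (coreRadius n) := by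
  have hM := one_le_centralBound n
  have hvp : ∀ s ∈ Icc 0 (coreRadius n), v s ^ p ≤ centralBound n ^ 2 := fun s hs =>
    calc v s ^ p ≤ centralBound n ^ p :=
          Real.rpow_le_rpow (h.v_pos s).le
            ((h.v_antitoneOn (mem_Ici.2 le_rfl) hs.1 hs.1).trans
              (h.v_zero_le_centralBound hp.1 hq)) (by linarith [hp.1])
      _ ≤ centralBound n ^ (2 : ℝ) := Real.rpow_le_rpow_of_exponent_le hM hp.2
      _ = centralBound n ^ 2 := Real.rpow_two _
  have hdrop := h.profile_u.sub_le_mul_sq (coreRadius_pos n).le (by positivity) hvp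
  have hMρ : centralBound n ^ 2 * coreRadius n ^ 2 = 1 / 4 := by
    unfold coreRadius; field_simp; ring
  rw [h.u_zero] at hdrop
  linarith

theorem decayConst_mul_rpow_le_v (h : IsRadialGroundState n p q u v) (hn : 1 ≤ n)
    (hp : p ∈ Icc (1 / 2) 2) (hq : q ∈ Icc 0 (4 * (n : ℝ))) {r : ℝ} (hr : coreRadius n ≤ r) :
    decayConst n * r ^ (2 - (n : ℝ)) ≤ v r := by
  have hρ := coreRadius_pos n
  have hr0 : 0 < r := hρ.trans_le hr
  have hF0 : ∀ s, 0 ≤ u s ^ q := fun s => (Real.rpow_pos_of_pos (h.u_pos s) q).le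
  have hwindow : ∀ s ∈ Icc (coreRadius n / 2) (coreRadius n), (1 / 16 : ℝ) ^ n ≤ u s ^ q := by
    intro s hs
    have hu : 1 / 2 ≤ u s := by
      linarith [h.three_quarters_le_u_coreRadius hp hq.1,
        h.u_antitoneOn (mem_Ici.2 (by linarith [hs.1])) (mem_Ici.2 hρ.le) hs.2]
    calc (1 / 16 : ℝ) ^ n = (1 / 2) ^ ((4 * n : ℕ) : ℝ) := by
          rw [Real.rpow_natCast, pow_mul]; norm_num
      _ ≤ (1 / 2) ^ q :=
          Real.rpow_le_rpow_of_exponent_ge (by norm_num) (by norm_num) (by push_cast; exact hq.2)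
      _ ≤ u s ^ q := Real.rpow_le_rpow (by norm_num) hu hq.1
  calc decayConst n * r ^ (2 - (n : ℝ))
      = r * ((1 / 16) ^ n * (coreRadius n / 2) ^ (n - 1) * (coreRadius n / 2)) /
          (2 * r) ^ (n - 1) := by
        rw [mul_comm r, mul_div_assoc, div_two_mul_pow_pred hr0 hn]; unfold decayConst; ring
    _ ≤ r * (∫ s in (0)..coreRadius n, s ^ (n - 1) * u s ^ q) / (2 * r) ^ (n - 1) := by
        gcongr
        exact mul_half_pow_le_integral_pow_mul h.profile_v.continuous_source hF0 _ hρ.le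
          (by positivity) hwindow
    _ ≤ r * (∫ s in (0)..r, s ^ (n - 1) * u s ^ q) / (2 * r) ^ (n - 1) := by
        gcongr
        exact integral_pow_mul_mono h.profile_v.continuous_source hF0 _ hρ.le hr
    _ ≤ v r - v (2 * r) := h.profile_v.mul_integral_div_le_sub hF0 hr0
    _ ≤ v r := by linarith [h.v_pos (2 * r)]

theorem groundConst_mul_rpow_le_u (h : IsRadialGroundState n p q u v) (hn : 1 ≤ n)
    (hp : p ∈ Icc (1 / 2) 2) (hq : q ∈ Icc 0 (4 * (n : ℝ))) {r : ℝ} (hr : 1 ≤ r) :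
    groundConst n * r ^ (2 + (2 - (n : ℝ)) * p) ≤ u r := by
  have hr0 : 0 < r := by linarith
  have hp0 : 0 ≤ p := by linarith [hp.1]
  have hc0 := decayConst_pos n
  have hv : decayConst n ^ 2 * r ^ ((2 - (n : ℝ)) * p) ≤ v r ^ p :=
    calc decayConst n ^ 2 * r ^ ((2 - (n : ℝ)) * p)
        ≤ decayConst n ^ p * r ^ ((2 - (n : ℝ)) * p) := by
          gcongr
          rw [← Real.rpow_two]
          exact Real.rpow_le_rpow_of_exponent_ge hc0 (decayConst_le_one n) hp.2
      _ = (decayConst n * r ^ (2 - (n : ℝ))) ^ p := by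
          rw [Real.mul_rpow hc0.le (Real.rpow_nonneg hr0.le _), ← Real.rpow_mul hr0.le]
      _ ≤ v r ^ p := Real.rpow_le_rpow (by positivity)
          (h.decayConst_mul_rpow_le_v hn hp hq ((coreRadius_le_one n).trans hr)) hp0
  have hdrop := h.profile_u.mul_sq_le_sub (fun s => (Real.rpow_pos_of_pos (h.v_pos s) p).le)
    hr0 (by positivity) fun s hs => hv.trans <| Real.rpow_le_rpow (h.v_pos r).le
      (h.v_antitoneOn (mem_Ici.2 (by linarith [hs.1])) (mem_Ici.2 hr0.le) hs.2) hp0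
  calc groundConst n * r ^ (2 + (2 - (n : ℝ)) * p)
      = decayConst n ^ 2 * r ^ ((2 - (n : ℝ)) * p) * r ^ 2 / (2 * 4 ^ (n - 1)) := by
        rw [Real.rpow_add hr0, Real.rpow_two]; unfold groundConst; ring
    _ ≤ u r - u (2 * r) := hdrop
    _ ≤ u r := by linarith [h.u_pos (2 * r)]

theorem lower_bounds (h : IsRadialGroundState n p q u v) (hn : 1 ≤ n)
    (hp : p ∈ Icc (1 / 2) 2) (hq : q ∈ Icc 0 (4 * (n : ℝ))) {γ : ℝ} (hγ : (n - 2) * p - 2 ≤ γ) :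
    (∀ r, 0 ≤ r → groundConst n / (1 + r ^ γ) ≤ u r) ∧
      ∀ r, 0 ≤ r → groundConst n / (1 + r ^ ((n : ℝ) - 2)) ≤ v r := by
  refine ⟨fun r hr => div_one_add_rpow_le_of_antitoneOn h.u_antitoneOn (groundConst_pos n).le
    (fun r hr1 => ?_) hr, fun r hr => div_one_add_rpow_le_of_antitoneOn h.v_antitoneOn
    (groundConst_pos n).le (fun r hr1 => ?_) hr⟩
  · calc groundConst n * r ^ (-γ) ≤ groundConst n * r ^ (2 + (2 - (n : ℝ)) * p) := by
          gcongr
          · exact (groundConst_pos n).le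
          · linarith
      _ ≤ u r := h.groundConst_mul_rpow_le_u hn hp hq hr1
  · calc groundConst n * r ^ (-((n : ℝ) - 2)) ≤ decayConst n * r ^ (2 - (n : ℝ)) := by
          rw [neg_sub]
          gcongr
          exact groundConst_le_decayConst n
      _ ≤ v r := h.decayConst_mul_rpow_le_v hn hp hq ((coreRadius_le_one n).trans hr1)

end IsRadialGroundState

theorem fderiv_fderiv_add_fderiv_eq_zero_of_comp_const {E : Type*} [NormedAddCommGroup E]
    [NormedSpace ℝ E] {f : E → ℝ} (hf : ContDiff ℝ 2 f) {c c' : ℝ → E} {s : ℝ} {a : E}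
    (hc : ∀ t, HasDerivAt c (c' t) t) (hc' : HasDerivAt c' a s)
    (hconst : ∀ t, f (c t) = f (c s)) :
    fderiv ℝ (fderiv ℝ f) (c s) (c' s) (c' s) + fderiv ℝ f (c s) a = 0 := by
  have hzero : ∀ t, fderiv ℝ f (c t) (c' t) = 0 := fun t =>
    ((hf.differentiable (by norm_num) (c t)).hasFDerivAt.comp_hasDerivAt t (hc t)).unique
      (by rw [show f ∘ c = fun _ => f (c s) from funext hconst]; exact hasDerivAt_const t _)
  have hderiv := ((hf.fderiv_right (m := 1) le_rfl).differentiable one_ne_zero (c s)).hasFDerivAt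
    |>.comp_hasDerivAt s (hc s) |>.clm_apply hc'
  exact hderiv.unique <| (hasDerivAt_const s 0).congr_of_eventuallyEq
    (Eventually.of_forall fun t => hzero t)

theorem fderiv_fderiv_orthogonal_of_radial {E : Type*} [NormedAddCommGroup E]
    [InnerProductSpace ℝ E] {f : E → ℝ} (hf : ContDiff ℝ 2 f)
    (hrad : ∀ x y, ‖x‖ = ‖y‖ → f x = f y) {e₁ e₂ : E} (h₁ : ‖e₁‖ = 1) (h₂ : ‖e₂‖ = 1)
    (h₁₂ : inner ℝ e₁ e₂ = 0) {t : ℝ} (ht : t ≠ 0) :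
    fderiv ℝ (fderiv ℝ f) (t • e₁) e₂ e₂ = fderiv ℝ f (t • e₁) e₁ / t := by
  -- differentiate `f` twice along the circle of radius `|t|` in the plane of `e₁, e₂`
  set c : ℝ → E := fun s => (t * Real.cos s) • e₁ + (t * Real.sin s) • e₂
  set c' : ℝ → E := fun s => (-(t * Real.sin s)) • e₁ + (t * Real.cos s) • e₂
  have hc : ∀ s, HasDerivAt c (c' s) s := fun s =>
    ((((Real.hasDerivAt_cos s).const_mul t).smul_const e₁).add
      (((Real.hasDerivAt_sin s).const_mul t).smul_const e₂)).congr_deriv (by simp [c'])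
  have hc' : HasDerivAt c' ((-t) • e₁) 0 :=
    (((Real.hasDerivAt_sin 0).const_mul t).neg.smul_const e₁ |>.add
      (((Real.hasDerivAt_cos 0).const_mul t).smul_const e₂)).congr_deriv (by simp)
  have hnorm : ∀ s, ‖c s‖ = ‖c 0‖ := by
    intro s
    have hsq : ∀ s, ‖c s‖ ^ 2 = t ^ 2 := fun s => by
      rw [norm_add_sq_real, inner_smul_left, inner_smul_right, h₁₂, norm_smul, norm_smul, h₁, h₂]
      simp only [Real.norm_eq_abs, abs_mul, mul_pow, sq_abs]
      linear_combination t ^ 2 * Real.sin_sq_add_cos_sq s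
    rw [← sq_eq_sq₀ (norm_nonneg _) (norm_nonneg _), hsq, hsq]
  have key := fderiv_fderiv_add_fderiv_eq_zero_of_comp_const hf hc hc' fun s => hrad _ _ (hnorm s)
  simp only [c, c', Real.cos_zero, Real.sin_zero, mul_zero, mul_one, neg_zero, zero_smul,
    add_zero, zero_add, map_smul, FunLike.coe_smul, Pi.smul_apply,
    smul_eq_mul] at key
  have hfactor : t * (t * fderiv ℝ (fderiv ℝ f) (t • e₁) e₂ e₂ - fderiv ℝ f (t • e₁) e₁) = 0 := by
    linear_combination key
  rw [eq_div_iff ht]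
  linear_combination (mul_eq_zero.1 hfactor).resolve_left ht

theorem eq_of_norm_eq_of_antitone {E : Type*} [Norm E] {f : E → ℝ}
    (hf : ∀ x y, ‖x‖ ≤ ‖y‖ → f y ≤ f x) : ∀ x y, ‖x‖ = ‖y‖ → f x = f y :=
  fun x y h => le_antisymm (hf y x h.ge) (hf x y h.le)

section RadialLaplacian

variable {n : ℕ} {f : EuclideanSpace ℝ (Fin n) → ℝ}

theorem lap_smul_single_of_radial (hf : ContDiff ℝ 2 f) (hrad : ∀ x y, ‖x‖ = ‖y‖ → f x = f y)
    {t : ℝ} (ht : t ≠ 0) (i : Fin n) :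
    lap f (t • EuclideanSpace.single i 1) =
      fderiv ℝ (fderiv ℝ f) (t • EuclideanSpace.single i 1) (EuclideanSpace.single i 1)
          (EuclideanSpace.single i 1) +
        (n - 1) * fderiv ℝ f (t • EuclideanSpace.single i 1) (EuclideanSpace.single i 1) / t := by
  have hon := EuclideanSpace.orthonormal_single (𝕜 := ℝ) (ι := Fin n)
  rw [lap, ← Finset.add_sum_erase _ _ (Finset.mem_univ i), Finset.sum_congr rfl fun j hj =>
    fderiv_fderiv_orthogonal_of_radial hf hrad (hon.1 i) (hon.1 j)
      (hon.2 (Finset.ne_of_mem_erase hj).symm) ht, Finset.sum_const,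
    Finset.card_erase_of_mem (Finset.mem_univ i), Finset.card_univ, Fintype.card_fin,
    nsmul_eq_mul, Nat.cast_pred i.pos]
  ring

theorem isRadialProfile_of_radial (hn : 2 ≤ n) (hf : ContDiff ℝ 2 f)
    (hrad : ∀ x y, ‖x‖ = ‖y‖ → f x = f y) {F : ℝ → ℝ} (hF : Continuous F) (i : Fin n)
    (hlap : ∀ t, -lap f (t • EuclideanSpace.single i 1) = F t) :
    IsRadialProfile n (fun t => f (t • EuclideanSpace.single i 1)) F := by
  have hline : ∀ t : ℝ, HasDerivAt (fun s : ℝ => s • EuclideanSpace.single i (1 : ℝ))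
      (EuclideanSpace.single i 1) t := fun t => by
    simpa using (hasDerivAt_id t).smul_const (EuclideanSpace.single i (1 : ℝ))
  refine IsRadialProfile.of_ode hn (φ'' := fun t => fderiv ℝ (fderiv ℝ f)
      (t • EuclideanSpace.single i 1) (EuclideanSpace.single i 1) (EuclideanSpace.single i 1))
    (fun t => (hf.differentiable two_ne_zero _).hasFDerivAt.comp_hasDerivAt t (hline t))
    (fun t => ((hf.fderiv_right (m := 1) le_rfl).differentiable one_ne_zero _).hasFDerivAt
      |>.comp_hasDerivAt t (hline t) |>.clm_apply (hasDerivAt_const t _) |>.congr_deriv ?_)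
    hF fun t ht => ?_
  · simp
  · rw [← hlap t, lap_smul_single_of_radial hf hrad ht.ne' i]
    ring

theorem norm_smul_single (i : Fin n) (t : ℝ) : ‖t • EuclideanSpace.single i (1 : ℝ)‖ = |t| := by
  simp [norm_smul]

theorem antitoneOn_smul_single_of_antitone (hf : ∀ x y, ‖x‖ ≤ ‖y‖ → f y ≤ f x) (i : Fin n) :
    AntitoneOn (fun t : ℝ => f (t • EuclideanSpace.single i 1)) (Ici 0) := fun s hs t ht hst =>
  hf _ _ (by rw [norm_smul_single, norm_smul_single, abs_of_nonneg hs, abs_of_nonneg ht]; exact hst)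

theorem apply_norm_smul_single_of_antitone (hf : ∀ x y, ‖x‖ ≤ ‖y‖ → f y ≤ f x) (i : Fin n)
    (x : EuclideanSpace ℝ (Fin n)) : f (‖x‖ • EuclideanSpace.single i 1) = f x :=
  eq_of_norm_eq_of_antitone hf _ _ (by rw [norm_smul_single, abs_norm])

end RadialLaplacian

theorem IsGroundState.isRadialGroundState {n : ℕ} {p q : ℝ}
    {U V : EuclideanSpace ℝ (Fin n) → ℝ} (hn : 2 ≤ n) (h : IsGroundState n p q U V) (i : Fin n) :
    IsRadialGroundState n p q (fun t => U (t • EuclideanSpace.single i 1))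
      (fun t => V (t • EuclideanSpace.single i 1)) := by
  obtain ⟨hU, hV, hUpos, hVpos, hUeq, hVeq, hUanti, hVanti, -, -, hU0⟩ := h
  have hline : Continuous fun t : ℝ => t • EuclideanSpace.single i (1 : ℝ) := by fun_prop
  exact
    { profile_u := isRadialProfile_of_radial hn hU (eq_of_norm_eq_of_antitone hUanti)
        ((hV.continuous.comp hline).rpow_const fun t => Or.inl (hVpos _).ne') i
        fun t => hUeq _
      profile_v := isRadialProfile_of_radial hn hV (eq_of_norm_eq_of_antitone hVanti)
        ((hU.continuous.comp hline).rpow_const fun t => Or.inl (hUpos _).ne') i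
        fun t => hVeq _
      u_pos := fun t => hUpos _
      v_pos := fun t => hVpos _
      u_antitoneOn := antitoneOn_smul_single_of_antitone hUanti i
      v_antitoneOn := antitoneOn_smul_single_of_antitone hVanti i
      u_zero := by simpa using hU0 }

theorem le_four_mul_of_critical {n : ℕ} (hn : 5 ≤ n) {p q : ℝ} (hq : 0 < q)
    (hpq : 1 / (p + 1) + 1 / (q + 1) = ((n : ℝ) - 2) / n) (hp : 1 - 1 / (4 * n) ≤ p) :
    q ≤ 4 * n := by
  have hn' : (5 : ℝ) ≤ n := by exact_mod_cast hn
  have hε : 1 / (4 * (n : ℝ)) ≤ 1 := by rw [div_le_one (by positivity)]; linarith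
  have hp' : 1 / (p + 1) ≤ 1 / 2 + 1 / (4 * n) := by
    rw [div_le_iff₀ (by linarith)]
    nlinarith [one_div_pos.2 (by positivity : (0 : ℝ) < 4 * n)]
  have hq' : 1 / (4 * n) ≤ 1 / (q + 1) := by
    have : ((n : ℝ) - 2) / n - 1 / 2 - 1 / (4 * n) - 1 / (4 * n) = (n - 5) / (2 * n) := by
      field_simp; ring
    have : (0 : ℝ) ≤ (n - 5) / (2 * n) := div_nonneg (by linarith) (by positivity)
    linarith
  rw [div_le_div_iff₀ (by positivity) (by linarith)] at hq'
  linarith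

theorem uniform_decay_lower_near_one (n : ℕ) (hn : 5 ≤ n) (η₂ : ℝ) (hη₂ : 0 < η₂) :
    ∃ ε₀ : ℝ, 0 < ε₀ ∧ ∃ C : ℝ, 0 < C ∧
      ∀ p q : ℝ, 0 < p → 0 < q →
        1 / (p + 1) + 1 / (q + 1) = ((n : ℝ) - 2) / n →
        |p - 1| ≤ ε₀ →
        ∀ U V : EuclideanSpace ℝ (Fin n) → ℝ, IsGroundState n p q U V →
          (∀ x, C / (1 + ‖x‖ ^ ((n : ℝ) - 4 + η₂)) ≤ U x) ∧
          (∀ x, C / (1 + ‖x‖ ^ ((n : ℝ) - 2)) ≤ V x) := by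
  have hn' : (5 : ℝ) ≤ n := by exact_mod_cast hn
  -- `p ≤ 1 + η₂ / (n - 2)` controls the decay exponent of `U`; `p ≥ 1 - 1 / (4n)` keeps `q ≤ 4n`
  refine ⟨min (η₂ / (n - 2)) (1 / (4 * n)), lt_min (div_pos hη₂ (by linarith)) (by positivity),
    groundConst n, groundConst_pos n, fun p q _ hq hpq hpε U V hUV => ?_⟩
  obtain ⟨hpη, hpn⟩ := le_min_iff.1 hpε
  rw [abs_le] at hpη hpn
  have hε : 1 / (4 * (n : ℝ)) ≤ 1 / 2 := by
    rw [div_le_div_iff₀ (by positivity) (by norm_num)]; linarith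
  have hp' : p ∈ Icc (1 / 2) 2 := ⟨by linarith, by linarith⟩
  have hq' : q ∈ Icc 0 (4 * (n : ℝ)) := ⟨hq.le, le_four_mul_of_critical hn hq hpq (by linarith)⟩
  have hγ : ((n : ℝ) - 2) * p - 2 ≤ n - 4 + η₂ := by
    have := (le_div_iff₀ (by linarith)).1 hpη.2
    linarith
  set i : Fin n := ⟨0, by omega⟩
  obtain ⟨hu, hv⟩ := (hUV.isRadialGroundState (by omega) i).lower_bounds (by omega) hp' hq' hγ
  obtain ⟨-, -, -, -, -, -, hUanti, hVanti, -⟩ := hUV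
  exact ⟨fun x => (hu _ (norm_nonneg x)).trans_eq (apply_norm_smul_single_of_antitone hUanti i x),
    fun x => (hv _ (norm_nonneg x)).trans_eq (apply_norm_smul_single_of_antitone hVanti i x)⟩
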